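/- Let G be a finite abelian group of unitary matrices and {φ_i = U_i φ} a geometrically uniform vector set with matrix Φ of columns φ_i and column space U. Then the canonical frame matrix F = Φ((Φ*Φ)^{1/2})^† is also geometrically uniform with respect to G: its columns satisfy f_i = U_i f_1 for each i, where f_1 is the column corresponding to the identity element. -/

import Mathlib

open Matrix
open scoped ComplexOrder
open scoped MatrixOrder

/-- `B` is a Moore–Penrose pseudoinverse of `A`. -/
def IsMoorePenrose {m n : Type*} [Fintype m] [Fintype n]
    (A : Matrix m n ℂ) (B : Matrix n m ℂ) : Prop :=
  A * B * A = A ∧ B * A * B = B ∧ (A * B)ᴴ = A * B ∧ (B * A)ᴴ = B * A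

/-- Uniqueness of the Moore–Penrose pseudoinverse. -/
lemma mp_unique {m n : Type*} [Fintype m] [Fintype n]
    (A : Matrix m n ℂ) (B C : Matrix n m ℂ)
    (hB : IsMoorePenrose A B) (hC : IsMoorePenrose A C) : B = C := by
  obtain ⟨hB1, hB2, hB3, hB4⟩ := hB
  obtain ⟨hC1, hC2, hC3, hC4⟩ := hC
  have hAB : A * B = A * C := by
    calc A * B = (A * B)ᴴ := hB3.symm
    _ = Bᴴ * Aᴴ := conjTranspose_mul _ _
    _ = Bᴴ * (A * C * A)ᴴ := by rw [hC1]
    _ = Bᴴ * (Aᴴ * (A * C)ᴴ) := by rw [conjTranspose_mul]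
    _ = (Bᴴ * Aᴴ) * (A * C)ᴴ := (Matrix.mul_assoc _ _ _).symm
    _ = (A * B)ᴴ * (A * C) := by rw [← conjTranspose_mul, hC3]
    _ = (A * B) * (A * C) := by rw [hB3]
    _ = (A * B * A) * C := by rw [Matrix.mul_assoc (A * B) A C]
    _ = A * C := by rw [hB1]
  have hBA : B * A = C * A := by
    calc B * A = (B * A)ᴴ := hB4.symm
    _ = Aᴴ * Bᴴ := conjTranspose_mul _ _
    _ = (A * (C * A))ᴴ * Bᴴ := by rw [← Matrix.mul_assoc, hC1]
    _ = (C * A)ᴴ * Aᴴ * Bᴴ := by rw [conjTranspose_mul]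
    _ = (C * A) * (Aᴴ * Bᴴ) := by rw [hC4, Matrix.mul_assoc]
    _ = (C * A) * (B * A) := by rw [← conjTranspose_mul, hB4]
    _ = C * (A * B * A) := by rw [Matrix.mul_assoc C A (B * A), ← Matrix.mul_assoc A B A]
    _ = C * A := by rw [hB1]
  calc B = B * A * B := hB2.symm
  _ = C * A * B := by rw [hBA]
  _ = C * (A * B) := Matrix.mul_assoc _ _ _
  _ = C * (A * C) := by rw [hAB]
  _ = C * A * C := (Matrix.mul_assoc _ _ _).symm
  _ = C := hC2

theorem stmt_19 {k : ℕ} (G : Type*) [CommGroup G] [Fintype G] [DecidableEq G]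
    (ρ : G → Matrix (Fin k) (Fin k) ℂ)
    (hρ_one : ρ 1 = 1)
    (hρ_mul : ∀ g h : G, ρ (g * h) = ρ g * ρ h)
    (hρ_unitary : ∀ g : G, (ρ g)ᴴ * ρ g = 1)
    (φ : Fin k → ℂ)
    (Φ : Matrix (Fin k) G ℂ) (hΦ : ∀ (g : G) (a : Fin k), Φ a g = (ρ g *ᵥ φ) a)
    (B : Matrix G G ℂ)
    (hB : IsMoorePenrose (CFC.sqrt (Φᴴ * Φ)) B) :
    ∀ g : G, (fun a => (Φ * B) a g) = ρ g *ᵥ (fun a => (Φ * B) a 1) := by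
  set S : Matrix G G ℂ := Φᴴ * Φ with hSdef
  set hS := Matrix.posSemidef_conjTranspose_mul_self Φ
  -- the regular-representation permutation matrices
  set P : G → Matrix G G ℂ := fun g => Matrix.of fun a b => if a = g * b then 1 else 0 with hPdef
  have hPL : ∀ (g : G) (M : Matrix G G ℂ) (a b : G), (P g * M) a b = M (g⁻¹ * a) b := by
    intro g M a b
    simp only [hPdef, Matrix.mul_apply, Matrix.of_apply, ite_mul, one_mul, zero_mul]
    rw [Finset.sum_eq_single (g⁻¹ * a)]
    · simp
    · intro c _ hc
      rw [if_neg]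
      intro h
      exact hc (by rw [h]; group)
    · simp
  have hPR : ∀ (g : G) (M : Matrix G G ℂ) (a b : G), (M * P g) a b = M a (g * b) := by
    intro g M a b
    simp only [hPdef, Matrix.mul_apply, Matrix.of_apply, mul_ite, mul_one, mul_zero]
    rw [Finset.sum_eq_single (g * b)]
    · simp
    · intro c _ hc
      exact if_neg fun h => hc h
    · simp
  have hPH : ∀ g : G, (P g)ᴴ = P g⁻¹ := by
    intro g
    ext a b
    simp only [hPdef, Matrix.conjTranspose_apply, Matrix.of_apply]
    by_cases h : b = g * a
    · rw [if_pos h, if_pos (by rw [h]; group)]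
      simp
    · rw [if_neg h, if_neg]
      · simp
      · intro h'; exact h (by rw [h']; group)
  have hPinv : ∀ g : G, P g * (P g)ᴴ = 1 := by
    intro g
    ext a b
    rw [hPH, hPL]
    simp only [hPdef, Matrix.of_apply, Matrix.one_apply]
    by_cases h : a = b
    · rw [if_pos (by rw [h]), if_pos h]
    · rw [if_neg (fun h' => h (mul_left_cancel h')), if_neg h]
  -- the Gram matrix entries
  have hSentry : ∀ a b : G, S a b = star φ ⬝ᵥ (((ρ a)ᴴ * ρ b) *ᵥ φ) := by
    intro a b
    have : S a b = star (ρ a *ᵥ φ) ⬝ᵥ (ρ b *ᵥ φ) := by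
      simp only [hSdef, Matrix.mul_apply, Matrix.conjTranspose_apply, dotProduct,
        Pi.star_apply, hΦ]
    rw [this, Matrix.star_mulVec]
    simp only [Matrix.dotProduct_mulVec, Matrix.vecMul_vecMul]
  -- S is invariant under conjugation by P g
  have hSconj : ∀ g : G, (P g)ᴴ * S * P g = S := by
    intro g
    ext a b
    rw [hPR, hPH, hPL]
    rw [show (g⁻¹)⁻¹ * a = g * a by group, hSentry, hSentry]
    congr 2
    rw [hρ_mul, hρ_mul, Matrix.conjTranspose_mul, mul_assoc, ← mul_assoc (ρ g)ᴴ,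
      hρ_unitary, one_mul]
  -- sqrt S is invariant under conjugation by P g
  have hsqrtconj : ∀ g : G, (P g)ᴴ * CFC.sqrt S * P g = CFC.sqrt S := by
    intro g
    have hpsd : Matrix.PosSemidef ((P g)ᴴ * CFC.sqrt S * P g) :=
      (Matrix.nonneg_iff_posSemidef.mp (CFC.sqrt_nonneg S)).conjTranspose_mul_mul_same (P g)
    have hsq : ((P g)ᴴ * CFC.sqrt S * P g) ^ 2 = S := by
      rw [pow_two]
      calc (P g)ᴴ * CFC.sqrt S * P g * ((P g)ᴴ * CFC.sqrt S * P g)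
          = (P g)ᴴ * CFC.sqrt S * (P g * (P g)ᴴ) * (CFC.sqrt S * P g) := by
            simp only [mul_assoc]
        _ = (P g)ᴴ * (CFC.sqrt S * CFC.sqrt S) * P g := by
            rw [hPinv]; simp only [mul_assoc, one_mul]
        _ = (P g)ᴴ * S * P g := by rw [CFC.sqrt_mul_sqrt_self S (Matrix.nonneg_iff_posSemidef.mpr hS)]
        _ = S := hSconj g
    exact (CFC.sqrt_unique (by rw [← pow_two]; exact hsq) (Matrix.nonneg_iff_posSemidef.mpr hpsd)).symm
  -- B is invariant under conjugation by P g
  have hBconj : ∀ g : G, (P g)ᴴ * B * P g = B := by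
    intro g
    have hQ : (P g)ᴴ * P g = 1 := by
      have h2 := hPinv g⁻¹
      rw [hPH, inv_inv] at h2
      rw [hPH]
      exact h2
    have hMP : IsMoorePenrose (CFC.sqrt S) ((P g)ᴴ * B * P g) := by
      obtain ⟨h1, h2, h3, h4⟩ := hB
      have key : ∀ X Y : Matrix G G ℂ,
          ((P g)ᴴ * X * P g) * ((P g)ᴴ * Y * P g) = (P g)ᴴ * (X * Y) * P g := by
        intro X Y
        calc ((P g)ᴴ * X * P g) * ((P g)ᴴ * Y * P g)
            = (P g)ᴴ * X * (P g * (P g)ᴴ) * (Y * P g) := by simp only [mul_assoc]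
          _ = (P g)ᴴ * (X * Y) * P g := by rw [hPinv]; simp only [mul_assoc, one_mul]
      have hA' : CFC.sqrt S = (P g)ᴴ * CFC.sqrt S * P g := (hsqrtconj g).symm
      constructor
      · rw [hA', key, key, h1]
      · refine ⟨by rw [hA', key, key, h2], ?_, ?_⟩
        · rw [hA', key, Matrix.conjTranspose_mul, Matrix.conjTranspose_mul,
            Matrix.conjTranspose_conjTranspose, h3]
          simp only [Matrix.mul_assoc]
        · rw [hA', key, Matrix.conjTranspose_mul, Matrix.conjTranspose_mul,
            Matrix.conjTranspose_conjTranspose, h4]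
          simp only [Matrix.mul_assoc]
    exact mp_unique (CFC.sqrt S) _ B hMP hB
  -- entrywise invariance of B
  have hBent : ∀ h g : G, B h g = B (g⁻¹ * h) 1 := by
    intro h g
    have := congrFun (congrFun (hBconj g) (g⁻¹ * h)) 1
    rw [hPR, hPH, hPL, show (g⁻¹)⁻¹ * (g⁻¹ * h) = h by group, mul_one] at this
    rw [← this]
  -- conclude
  intro g
  funext a
  have hcol : ∀ (i : Fin k) (h : G), Φ i (g * h) = (ρ g *ᵥ fun j => Φ j h) i := by
    intro i h
    rw [hΦ, hρ_mul, ← Matrix.mulVec_mulVec]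
    congr 1
    funext j
    rw [hΦ]
  calc (Φ * B) a g = ∑ h : G, Φ a h * B h g := Matrix.mul_apply
    _ = ∑ h : G, Φ a h * B (g⁻¹ * h) 1 := by
        refine Finset.sum_congr rfl fun h _ => ?_
        rw [hBent h g]
    _ = ∑ h : G, Φ a (g * h) * B h 1 := by
        rw [← Equiv.sum_comp (Equiv.mulLeft g) (fun h => Φ a h * B (g⁻¹ * h) 1)]
        refine Finset.sum_congr rfl fun h _ => ?_
        simp [Equiv.mulLeft]
    _ = ∑ h : G, (ρ g *ᵥ fun j => Φ j h) a * B h 1 := by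
        refine Finset.sum_congr rfl fun h _ => ?_
        rw [hcol]
    _ = (ρ g *ᵥ fun a' => (Φ * B) a' 1) a := by
        simp only [Matrix.mulVec, dotProduct, Matrix.mul_apply, Finset.sum_mul,
          Finset.mul_sum]
        rw [Finset.sum_comm]
        exact Finset.sum_congr rfl fun i _ => Finset.sum_congr rfl fun h _ => by ring
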